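/- Let r ≥ 1 be an integer and q a positive integer, and let B ≥ 2 be a real number. Define, for integers b₁,…,b_{2r}, A_j = ∏_{i≠j} (b_i − b_j). Then the sum over all tuples (b₁,…,b_{2r}) with 1 ≤ b_i ≤ B of min{gcd(A_j, q) : 1 ≤ j ≤ 2r, A_j ≠ 0} (interpreting the minimum over an empty set as 0) is at most 2r·⌊B⌋^{2r}·τ_{2r}(q). -/

import Mathlib

/-- `Aprod b j = ∏_{i ≠ j} (b i - b j)`. -/
def Aprod {m : ℕ} (b : Fin m → ℤ) (j : Fin m) : ℤ :=
  ∏ i ∈ Finset.univ.filter fun i => i ≠ j, (b i - b j)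

/-- `min { gcd(A_j, q) : A_j ≠ 0 }`, interpreted as `0` if all `A_j` vanish. -/
def minGcd {m : ℕ} (b : Fin m → ℤ) (q : ℕ) : ℕ :=
  if h : (Finset.univ.filter fun j : Fin m => Aprod b j ≠ 0).Nonempty then
    ((Finset.univ.filter fun j : Fin m => Aprod b j ≠ 0).image
        fun j => Int.gcd (Aprod b j) q).min' (h.image _)
  else 0

/-- `tauk k n` : the number of ways to write `n` as an ordered product of `k`
positive integers (the `k`-dimensional divisor function `τ_k`). -/
def tauk (k n : ℕ) : ℕ :=
  ((Fintype.piFinset fun _ : Fin k => n.divisors).filter fun f => ∏ i, f i = n).card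

/-!
If some `A_j` is nonzero, let `g = gcd(A_j, q)`. As `g` divides `∏_{i ≠ j} |b_i - b_j|`, it
splits as `g = ∏_{i ≠ j} d_i` with `d_i ∣ b_i - b_j`, and `d_j = q / g` completes this to an
ordered factorisation `d` of `q` into `2r` factors. So `minGcd b q` is at most the sum, over `j`
and over ordered factorisations `f` of `q`, of the weight
`∏_{i ≠ j} f_i [b_i ≠ b_j, f_i ∣ b_i - b_j]`.
Once `b_j = t` is fixed this weight factors over the coordinates `i ≠ j`, and `f_i` times the
number of `x ∈ [1, M]` with `x ≠ t` and `f_i ∣ x - t` is at most `M - 1`. Summing over `b` thus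
gives at most `M ^ (2r)` for each of the `2r τ_{2r}(q)` pairs `(j, f)`.
-/

open Finset

theorem exists_prod_eq_of_dvd_prod {ι α : Type*} [CommMonoid α] [DecompositionMonoid α]
    [Subsingleton αˣ] [DecidableEq ι] {s : Finset ι} {h : ι → α} {g : α} (hg : g ∣ ∏ i ∈ s, h i) :
    ∃ d : ι → α, (∀ i ∈ s, d i ∣ h i) ∧ ∏ i ∈ s, d i = g := by
  induction s using Finset.induction_on generalizing g with
  | empty =>
    exact ⟨fun _ => 1, by simp, (isUnit_iff_eq_one.1 (isUnit_of_dvd_one (by simpa using hg))).symm⟩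
  | insert a s ha ih =>
    rw [prod_insert ha] at hg
    obtain ⟨g₁, g₂, hg₁, hg₂, rfl⟩ := exists_dvd_and_dvd_of_dvd_mul hg
    obtain ⟨d, hd, rfl⟩ := ih hg₂
    refine ⟨Function.update d a g₁, ?_, ?_⟩
    · intro i hi
      rcases eq_or_ne i a with rfl | hia
      · simpa using hg₁
      · simpa [hia] using hd i ((mem_insert.1 hi).resolve_left hia)
    · rw [prod_insert ha, Function.update_self, prod_update_of_notMem ha]

theorem sum_piFinset_prod_erase_le {ι α : Type*} [Fintype ι] [DecidableEq ι] [DecidableEq α]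
    (s : Finset α) (j : ι) (g : ι → α → α → ℕ) (K : ℕ)
    (hK : ∀ t ∈ s, ∀ i, ∑ x ∈ s, g i x t ≤ K) :
    ∑ b ∈ Fintype.piFinset fun _ => s, ∏ i ∈ univ.erase j, g i (b i) (b j)
      ≤ #s * K ^ (Fintype.card ι - 1) := by
  calc ∑ b ∈ Fintype.piFinset fun _ => s, ∏ i ∈ univ.erase j, g i (b i) (b j)
      = ∑ t ∈ s, ∑ b ∈ Fintype.piFinset (Function.update (fun _ => s) j {t}),
          ∏ i, (if i = j then 1 else g i (b i) t) := by
        rw [← sum_fiberwise_of_maps_to (g := fun b => b j) (t := s)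
          fun b hb => Fintype.mem_piFinset.1 hb j]
        refine sum_congr rfl fun t ht => ?_
        rw [Fintype.piFinset_update_singleton_eq_filter_piFinset_eq _ _ ht]
        refine sum_congr rfl fun b hb => ?_
        rw [← mul_prod_erase univ _ (mem_univ j), if_pos rfl, one_mul, (mem_filter.1 hb).2]
        exact prod_congr rfl fun i hi => (if_neg (ne_of_mem_erase hi)).symm
    _ = ∑ t ∈ s, ∏ i ∈ univ.erase j, ∑ x ∈ s, g i x t := by
        refine sum_congr rfl fun t _ => ?_
        rw [← prod_univ_sum (f := fun i x => if i = j then 1 else g i x t),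
          ← mul_prod_erase univ _ (mem_univ j)]
        simp only [Function.update_self, sum_singleton, if_true, one_mul]
        exact prod_congr rfl fun i hi => by
          rw [Function.update_of_ne (ne_of_mem_erase hi)]
          exact sum_congr rfl fun x _ => if_neg (ne_of_mem_erase hi)
    _ ≤ ∑ _t ∈ s, K ^ (Fintype.card ι - 1) := by
        refine sum_le_sum fun t ht => ?_
        rw [← card_univ, ← card_erase_of_mem (mem_univ j), ← prod_const]
        exact prod_le_prod' fun i _ => hK t ht i
    _ = #s * K ^ (Fintype.card ι - 1) := by rw [sum_const, smul_eq_mul]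

theorem natCast_dvd_toNat {d : ℕ} {x : ℤ} (hx : 0 ≤ x) (h : (d : ℤ) ∣ x) : d ∣ x.toNat :=
  Int.natCast_dvd_natCast.1 (by rwa [Int.toNat_of_nonneg hx])

theorem toNat_pow_le_pow_of_even {n : ℕ} (hn : Even n) (x : ℤ) : (x.toNat : ℤ) ^ n ≤ x ^ n :=
  calc (x.toNat : ℤ) ^ n ≤ |x| ^ n := by
        gcongr
        rw [Int.toNat_eq_max]
        exact max_le (le_abs_self x) (abs_nonneg x)
    _ = x ^ n := hn.pow_abs x

def dvdWeight (d : ℕ) (x : ℤ) : ℕ := if x ≠ 0 ∧ (d : ℤ) ∣ x then d else 0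

theorem sum_dvdWeight_sub_le (d : ℕ) {M t : ℤ} (ht : t ∈ Icc 1 M) :
    ∑ x ∈ Icc 1 M, dvdWeight d (x - t) ≤ M.toNat := by
  rw [mem_Icc] at ht
  have hsub : {x ∈ Icc 1 M | x - t ≠ 0 ∧ (d : ℤ) ∣ x - t} ⊆
      {y ∈ Ioc 0 (M - t).toNat | d ∣ y}.image (fun y : ℕ => t + y) ∪
        {y ∈ Ioc 0 (t - 1).toNat | d ∣ y}.image (fun y : ℕ => t - y) := by
    intro x hx
    simp only [mem_filter, mem_Icc] at hx
    obtain ⟨⟨hx₁, hx₂⟩, hne, hdvd⟩ := hx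
    simp only [mem_union, mem_image, mem_filter, mem_Ioc]
    rcases lt_or_gt_of_ne hne with hlt | hgt
    · refine Or.inr ⟨(t - x).toNat, ⟨⟨by omega, by omega⟩, ?_⟩, by omega⟩
      exact natCast_dvd_toNat (by omega) (dvd_sub_comm.1 hdvd)
    · refine Or.inl ⟨(x - t).toNat, ⟨⟨by omega, by omega⟩, ?_⟩, by omega⟩
      exact natCast_dvd_toNat hgt.le hdvd
  calc ∑ x ∈ Icc 1 M, dvdWeight d (x - t)
      = #{x ∈ Icc 1 M | x - t ≠ 0 ∧ (d : ℤ) ∣ x - t} * d := by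
        simp only [dvdWeight]
        rw [sum_ite, sum_const, sum_const_zero, smul_eq_mul, add_zero]
    _ ≤ ((M - t).toNat / d + (t - 1).toNat / d) * d := by
        gcongr
        rw [← Nat.Ioc_filter_dvd_card_eq_div, ← Nat.Ioc_filter_dvd_card_eq_div]
        exact (card_le_card hsub).trans
          ((card_union_le _ _).trans (add_le_add card_image_le card_image_le))
    _ ≤ (M - t).toNat + (t - 1).toNat := by
        rw [add_mul]
        exact add_le_add (Nat.div_mul_le_self _ _) (Nat.div_mul_le_self _ _)
    _ ≤ M.toNat := by omega

def orderedFactorizations (k n : ℕ) : Finset (Fin k → ℕ) :=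
  {f ∈ Fintype.piFinset fun _ => n.divisors | ∏ i, f i = n}

theorem card_orderedFactorizations (k n : ℕ) : #(orderedFactorizations k n) = tauk k n := rfl

section

variable {m : ℕ}

def tupleWeight (b : Fin m → ℤ) (j : Fin m) (f : Fin m → ℕ) : ℕ :=
  ∏ i ∈ univ.erase j, dvdWeight (f i) (b i - b j)

theorem sum_tupleWeight_le (M : ℤ) (j : Fin m) (f : Fin m → ℕ) :
    ∑ b ∈ Fintype.piFinset fun _ : Fin m => Icc 1 M, tupleWeight b j f ≤ M.toNat ^ m := by
  have h := sum_piFinset_prod_erase_le (Icc 1 M) j (fun i x t => dvdWeight (f i) (x - t))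
    M.toNat fun t ht i => sum_dvdWeight_sub_le (f i) ht
  rwa [Int.card_Icc, add_sub_cancel_right, Fintype.card_fin, ← pow_succ',
    Nat.sub_add_cancel j.pos] at h

theorem Aprod_eq_prod_erase (b : Fin m → ℤ) (j : Fin m) :
    Aprod b j = ∏ i ∈ univ.erase j, (b i - b j) := by
  rw [Aprod, filter_ne']

theorem minGcd_le_gcd {b : Fin m → ℤ} {j : Fin m} (q : ℕ) (hj : Aprod b j ≠ 0) :
    minGcd b q ≤ (Aprod b j).gcd q := by
  have hmem : j ∈ univ.filter fun j : Fin m => Aprod b j ≠ 0 := mem_filter.2 ⟨mem_univ j, hj⟩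
  rw [minGcd, dif_pos ⟨j, hmem⟩]
  exact min'_le _ _ (mem_image_of_mem _ hmem)

theorem minGcd_eq_zero {b : Fin m → ℤ} (q : ℕ) (h : ∀ j, Aprod b j = 0) :
    minGcd b q = 0 := by
  rw [minGcd, dif_neg]
  simpa [filter_nonempty_iff] using h

theorem exists_tupleWeight_eq_gcd {q : ℕ} (hq : 0 < q) {b : Fin m → ℤ} {j : Fin m}
    (hj : Aprod b j ≠ 0) :
    ∃ f ∈ orderedFactorizations m q, tupleWeight b j f = (Aprod b j).gcd q := by
  set g := (Aprod b j).gcd q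
  have hgq : g ∣ q := Int.natCast_dvd_natCast.1 (Int.gcd_dvd_right _ _)
  rw [Aprod_eq_prod_erase] at hj
  have hgA : g ∣ ∏ i ∈ univ.erase j, (b i - b j).natAbs := by
    have h : g ∣ (Aprod b j).natAbs := Int.natCast_dvd.1 (Int.gcd_dvd_left _ _)
    rw [Aprod_eq_prod_erase] at h
    exact h.trans (map_prod Int.natAbsHom _ _).dvd
  obtain ⟨d, hd, hdg⟩ := exists_prod_eq_of_dvd_prod hgA
  have hprod : ∏ i, Function.update d j (q / g) i = q := by
    rw [← mul_prod_erase univ _ (mem_univ j), Function.update_self,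
      prod_congr rfl fun i hi => Function.update_of_ne (ne_of_mem_erase hi) _ _, hdg,
      Nat.div_mul_cancel hgq]
  refine ⟨Function.update d j (q / g), ?_, ?_⟩
  · refine mem_filter.2 ⟨Fintype.mem_piFinset.2 fun i => Nat.mem_divisors.2 ⟨?_, hq.ne'⟩, hprod⟩
    exact (dvd_prod_of_mem _ (mem_univ i)).trans hprod.dvd
  · rw [tupleWeight, ← hdg]
    refine prod_congr rfl fun i hi => ?_
    rw [Function.update_of_ne (ne_of_mem_erase hi), dvdWeight,
      if_pos ⟨prod_ne_zero_iff.1 hj i hi, Int.natCast_dvd.2 (hd i hi)⟩]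

theorem minGcd_le_sum_tupleWeight {q : ℕ} (hq : 0 < q) (b : Fin m → ℤ) :
    minGcd b q ≤ ∑ j, ∑ f ∈ orderedFactorizations m q, tupleWeight b j f := by
  by_cases h : ∃ j, Aprod b j ≠ 0
  · obtain ⟨j, hj⟩ := h
    obtain ⟨f, hf, hfg⟩ := exists_tupleWeight_eq_gcd hq hj
    calc minGcd b q ≤ tupleWeight b j f := hfg ▸ minGcd_le_gcd q hj
      _ ≤ ∑ f ∈ orderedFactorizations m q, tupleWeight b j f :=
          single_le_sum (fun _ _ => Nat.zero_le _) hf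
      _ ≤ _ := single_le_sum (f := fun j => ∑ f ∈ orderedFactorizations m q, tupleWeight b j f)
          (fun _ _ => Nat.zero_le _) (mem_univ j)
  · simp only [not_exists, not_not] at h
    rw [minGcd_eq_zero q h]
    exact Nat.zero_le _

theorem sum_minGcd_le {q : ℕ} (hq : 0 < q) (M : ℤ) :
    ∑ b ∈ Fintype.piFinset fun _ : Fin m => Icc 1 M, minGcd b q
      ≤ m * M.toNat ^ m * tauk m q := by
  calc ∑ b ∈ Fintype.piFinset fun _ : Fin m => Icc 1 M, minGcd b q
      ≤ ∑ b ∈ Fintype.piFinset fun _ : Fin m => Icc 1 M,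
          ∑ j, ∑ f ∈ orderedFactorizations m q, tupleWeight b j f :=
        sum_le_sum fun b _ => minGcd_le_sum_tupleWeight hq b
    _ = ∑ j, ∑ f ∈ orderedFactorizations m q,
          ∑ b ∈ Fintype.piFinset fun _ : Fin m => Icc 1 M, tupleWeight b j f := by
        rw [sum_comm]
        exact sum_congr rfl fun j _ => sum_comm
    _ ≤ ∑ _j : Fin m, ∑ _f ∈ orderedFactorizations m q, M.toNat ^ m :=
        sum_le_sum fun j _ => sum_le_sum fun f _ => sum_tupleWeight_le M j f
    _ = m * M.toNat ^ m * tauk m q := by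
        rw [sum_const, sum_const, card_orderedFactorizations, card_univ, Fintype.card_fin,
          smul_eq_mul, smul_eq_mul]
        ring

end

theorem sum_minGcd_le_tauk_general (r q : ℕ) (hq : 0 < q) (B : ℝ) :
    ∑ b ∈ Fintype.piFinset fun _ : Fin (2 * r) => Finset.Icc (1 : ℤ) ⌊B⌋,
        (minGcd b q : ℝ)
      ≤ 2 * r * ((⌊B⌋ : ℝ)) ^ (2 * r) * (tauk (2 * r) q : ℝ) := by
  have hpow : (⌊B⌋.toNat : ℝ) ^ (2 * r) ≤ (⌊B⌋ : ℝ) ^ (2 * r) := by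
    exact_mod_cast toNat_pow_le_pow_of_even (even_two_mul r) ⌊B⌋
  calc ∑ b ∈ Fintype.piFinset fun _ : Fin (2 * r) => Finset.Icc (1 : ℤ) ⌊B⌋, (minGcd b q : ℝ)
      ≤ ((2 * r * ⌊B⌋.toNat ^ (2 * r) * tauk (2 * r) q : ℕ) : ℝ) := by
        exact_mod_cast sum_minGcd_le hq ⌊B⌋
    _ ≤ 2 * r * ((⌊B⌋ : ℝ)) ^ (2 * r) * (tauk (2 * r) q : ℝ) := by
        push_cast
        gcongr

theorem sum_minGcd_le_tauk (r q : ℕ) (hr : 1 ≤ r) (hq : 0 < q) (B : ℝ)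
    (hB2 : 2 ≤ B) :
    ∑ b ∈ Fintype.piFinset fun _ : Fin (2 * r) => Finset.Icc (1 : ℤ) ⌊B⌋,
        (minGcd b q : ℝ)
      ≤ 2 * r * ((⌊B⌋ : ℝ)) ^ (2 * r) * (tauk (2 * r) q : ℝ) :=
  sum_minGcd_le_tauk_general r q hq B
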